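/- arXiv:2603.27851 — 4 statements merged into one kernel-verified Lean document; each statement's English description precedes it below -/
import Mathlib

section
/- Let G be a compact Hausdorff topological group and D : G → [0,∞) a continuous function. If there exists a regular Borel probability measure ν on G which is D-dominating, then the normalized Haar measure σ_G on G is D-dominating, i.e. 1 ≤ ∫_G D(ψφ) dσ_G(φ) for all ψ ∈ G. -/
/-!
Integrating the domination inequality `1 ≤ ∫ D(φχ) dν(χ)` over `φ` against `σ` and swapping the
order of integration gives `1 ≤ ∫∫ D(φχ) dσ(φ) dν(χ) = ∫ D dσ`, because on a compact group the
normalized Haar measure is also right invariant. Left invariance then identifies `∫ D dσ` with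
`∫ D(ψφ) dσ(φ)` for every `ψ`.
-/

open MeasureTheory Measure

section ParametricIntegral

variable {X Y E : Type*} [TopologicalSpace X] [TopologicalSpace Y] [CompactSpace Y]
  [MeasurableSpace Y] [OpensMeasurableSpace Y] [NormedAddCommGroup E] [NormedSpace ℝ E]

theorem continuous_integral_of_compactSpace {μ : Measure Y} [IsFiniteMeasure μ] {f : X → Y → E}
    (hf : Continuous f.uncurry) : Continuous fun x ↦ ∫ y, f x y ∂μ := by
  rw [← continuousOn_univ]
  exact continuousOn_integral_of_compact_support isCompact_univ hf.continuousOn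
    fun _ y _ hy ↦ absurd (Set.mem_univ y) hy

end ParametricIntegral

section CompactGroup

variable {G : Type*} [Group G] [TopologicalSpace G] [IsTopologicalGroup G] [CompactSpace G]
  [MeasurableSpace G] [BorelSpace G]

theorem isHaarMeasure_of_isProbabilityMeasure (μ : Measure G) [IsProbabilityMeasure μ]
    [μ.IsMulLeftInvariant] : μ.IsHaarMeasure :=
  isHaarMeasure_of_isCompact_nonempty_interior μ Set.univ isCompact_univ (by simp) (by simp)
    (by simp)

/-- Each right translate of `μ` is again a left-invariant probability measure, hence equals `μ`
by uniqueness of the normalized Haar measure. -/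
theorem isMulRightInvariant_of_isProbabilityMeasure (μ : Measure G) [IsProbabilityMeasure μ]
    [μ.IsMulLeftInvariant] : μ.IsMulRightInvariant where
  map_mul_right_eq_self g := by
    have : IsProbabilityMeasure (μ.map (· * g)) :=
      isProbabilityMeasure_map (measurable_mul_const g).aemeasurable
    have := isHaarMeasure_of_isProbabilityMeasure (μ.map (· * g))
    have := isHaarMeasure_of_isProbabilityMeasure μ
    exact isHaarMeasure_eq_of_isProbabilityMeasure _ μ

variable {E : Type*} [NormedAddCommGroup E] [NormedSpace ℝ E] [CompleteSpace E]

theorem integral_integral_mul_eq_integral (μ ν : Measure G) [IsFiniteMeasure μ]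
    [μ.IsMulRightInvariant] [IsProbabilityMeasure ν] {f : G → E} (hf : Continuous f) :
    ∫ φ, ∫ χ, f (φ * χ) ∂ν ∂μ = ∫ φ, f φ ∂μ := by
  have hf₂ : Continuous (Function.uncurry fun φ χ : G ↦ f (φ * χ)) := hf.comp continuous_mul
  rw [integral_integral_swap_of_hasCompactSupport hf₂ (.of_compactSpace _)]
  simp only [integral_mul_right_eq_self f, integral_const, probReal_univ, one_smul]

end CompactGroup

theorem haar_is_D_dominating_general
    {G : Type*} [Group G] [TopologicalSpace G] [IsTopologicalGroup G]
    [CompactSpace G] [MeasurableSpace G] [BorelSpace G]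
    (σ : Measure G) [IsProbabilityMeasure σ] [σ.IsMulLeftInvariant]
    (D : G → ℝ) (hDcont : Continuous D)
    (ν : Measure G) [IsProbabilityMeasure ν]
    (hν : ∀ ψ : G, 1 ≤ ∫ φ, D (ψ * φ) ∂ν) :
    ∀ ψ : G, 1 ≤ ∫ φ, D (ψ * φ) ∂σ := by
  intro ψ
  have := isMulRightInvariant_of_isProbabilityMeasure σ
  have h_integrable : Integrable (fun φ ↦ ∫ χ, D (φ * χ) ∂ν) σ :=
    (continuous_integral_of_compactSpace (f := fun φ χ ↦ D (φ * χ))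
      (hDcont.comp continuous_mul)).integrable_of_hasCompactSupport
      (.of_compactSpace _)
  calc (1 : ℝ) = ∫ _, (1 : ℝ) ∂σ := by simp
    _ ≤ ∫ φ, ∫ χ, D (φ * χ) ∂ν ∂σ := integral_mono (integrable_const 1) h_integrable hν
    _ = ∫ φ, D φ ∂σ := integral_integral_mul_eq_integral σ ν hDcont
    _ = ∫ φ, D (ψ * φ) ∂σ := (integral_mul_left_eq_self D ψ).symm

/-- If some regular Borel probability measure `ν` on a compact Hausdorff
topological group `G` is `D`-dominating for a continuous `D : G → [0,∞)`, then the normalized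
Haar measure `σ` (the left-invariant regular Borel probability measure on `G`) is
`D`-dominating. -/
theorem haar_is_D_dominating
    {G : Type*} [Group G] [TopologicalSpace G] [IsTopologicalGroup G]
    [CompactSpace G] [T2Space G] [MeasurableSpace G] [BorelSpace G]
    (σ : Measure G) [IsProbabilityMeasure σ] [σ.IsMulLeftInvariant] [σ.Regular]
    (D : G → ℝ) (hDcont : Continuous D) (hDnonneg : ∀ φ : G, 0 ≤ D φ)
    (ν : Measure G) [IsProbabilityMeasure ν] [ν.Regular]
    (hν : ∀ ψ : G, 1 ≤ ∫ φ, D (ψ * φ) ∂ν) :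
    ∀ ψ : G, 1 ≤ ∫ φ, D (ψ * φ) ∂σ :=
  haar_is_D_dominating_general σ D hDcont ν hν
end

section
/- Let E be a Banach space, Y a metric space, 1 ≤ p < ∞ and u : E → Y a Lipschitz map. Then u is Lipschitz p-B_{E*}-summing if and only if there exist a constant C > 0 and a regular Borel probability measure ν on the closed unit ball B_{E*} of the dual of E endowed with the weak* topology such that d_Y(u(x),u(q)) ≤ C (∫_{B_{E*}} |α(x−q)|^p dν(α))^{1/p} for all x, q ∈ E. Moreover, π_p^*(u) equals the infimum of all constants C for which such a measure exists. -/
open MeasureTheory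

/-- The closed unit ball of the dual of `E`, endowed with the weak* topology (as a subtype of
`WeakDual ℝ E`). -/
def WeakStarBall (E : Type*) [NormedAddCommGroup E] [NormedSpace ℝ E] : Type _ :=
  {α : WeakDual ℝ E // ‖WeakDual.toStrongDual α‖ ≤ 1}

noncomputable instance (E : Type*) [NormedAddCommGroup E] [NormedSpace ℝ E] :
    TopologicalSpace (WeakStarBall E) :=
  instTopologicalSpaceSubtype

noncomputable instance (E : Type*) [NormedAddCommGroup E] [NormedSpace ℝ E] :
    MeasurableSpace (WeakStarBall E) := borel _

instance (E : Type*) [NormedAddCommGroup E] [NormedSpace ℝ E] :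
    BorelSpace (WeakStarBall E) := ⟨rfl⟩

/-! For `g x q : α ↦ d(u x, u q) ^ p - C ^ p |α (x - q)| ^ p`, a continuous function on the
weak*-compact ball, the summing inequality says exactly that no finite sum of the `g x q` is
positive everywhere. Rounding weights, the same holds for their convex combinations, so
Hahn–Banach separates them from the open cone of positive functions; the separating functional,
normalized, is a positive functional `Λ` with `Λ 1 = 1` and `Λ (g x q) ≤ 0`, and
Riesz–Markov–Kakutani represents it by a regular probability measure `ν`, which is the
domination. Conversely, integrating the domination against `ν` and bounding the integral by a
maximum gives the summing inequality with the same constant, so both sets of constants agree. -/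

open scoped CompactlySupported

lemma AddSubmonoid.exists_fin_sum_of_mem_closure_range {M ι : Type*} [AddCommMonoid M]
    {f : ι → M} {x : M} (hx : x ∈ AddSubmonoid.closure (Set.range f)) :
    ∃ (n : ℕ) (i : Fin n → ι), ∑ j, f (i j) = x := by
  induction hx using AddSubmonoid.closure_induction with
  | mem _ h =>
    obtain ⟨i, rfl⟩ := h
    exact ⟨1, fun _ => i, by simp⟩
  | zero => exact ⟨0, Fin.elim0, by simp⟩
  | add _ _ _ _ ha hb =>
    obtain ⟨m, i, rfl⟩ := ha
    obtain ⟨n, k, rfl⟩ := hb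
    exact ⟨m + n, Fin.append i k, by simp [Fin.sum_univ_add]⟩

lemma Real.le_mul_rpow_one_div_iff {a b C p : ℝ} (ha : 0 ≤ a) (hb : 0 ≤ b) (hC : 0 ≤ C)
    (hp : 0 < p) : a ≤ C * b ^ (1 / p) ↔ a ^ p ≤ C ^ p * b := by
  have : C * b ^ (1 / p) = (C ^ p * b) ^ p⁻¹ := by
    rw [Real.mul_rpow (by positivity) hb, Real.rpow_rpow_inv hC hp.ne', one_div]
  rw [this, Real.le_rpow_inv_iff_of_pos ha (by positivity) hp]

lemma Real.rpow_one_div_le_mul_iSup_iff {K : Type*} [TopologicalSpace K] [CompactSpace K]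
    [Nonempty K] {f : K → ℝ} (hf : Continuous f) (hf₀ : ∀ x, 0 ≤ f x) {a C p : ℝ} (ha : 0 ≤ a)
    (hC : 0 ≤ C) (hp : 0 < p) :
    a ^ (1 / p) ≤ C * ⨆ x, f x ^ (1 / p) ↔ ∃ x, a ≤ C ^ p * f x := by
  obtain ⟨x₀, -, hx₀⟩ := isCompact_univ.exists_isMaxOn Set.univ_nonempty hf.continuousOn
  have hmax (x : K) : f x ^ (1 / p) ≤ f x₀ ^ (1 / p) :=
    Real.rpow_le_rpow (hf₀ x) (hx₀ (Set.mem_univ x)) (by positivity)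
  have hsup : ⨆ x, f x ^ (1 / p) = f x₀ ^ (1 / p) :=
    le_antisymm (ciSup_le hmax) (le_ciSup ⟨_, Set.forall_mem_range.mpr hmax⟩ x₀)
  have key (x : K) : a ^ (1 / p) ≤ C * f x ^ (1 / p) ↔ a ≤ C ^ p * f x := by
    rw [Real.le_mul_rpow_one_div_iff (by positivity) (hf₀ x) hC hp, one_div,
      Real.rpow_inv_rpow ha hp.ne']
  rw [hsup]
  refine ⟨fun h => ⟨x₀, (key x₀).mp h⟩, fun ⟨x, hx⟩ => ?_⟩
  exact ((key x).mpr hx).trans (mul_le_mul_of_nonneg_left (hmax x) hC)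

lemma Nat.mul_sub_le_floor_mul {r a b : ℝ} (hr : 0 ≤ r) (hab : |a| ≤ b) :
    r * a - b ≤ ⌊r⌋₊ * a := by
  have h₀ : 0 ≤ r - ⌊r⌋₊ := sub_nonneg.mpr (Nat.floor_le hr)
  have h₁ : r - ⌊r⌋₊ ≤ 1 := (sub_le_iff_le_add'.mpr (Nat.lt_floor_add_one r).le)
  nlinarith [neg_abs_le a, le_abs_self a, abs_nonneg a]

lemma nonpos_of_forall_pos_mul_lt {a c : ℝ} (h : ∀ s : ℝ, 0 < s → s * a < c) : a ≤ 0 := by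
  by_contra! ha
  have := h ((|c| + 1) / a) (by positivity)
  rw [div_mul_cancel₀ _ ha.ne'] at this
  linarith [le_abs_self c]

lemma nonneg_of_forall_pos_mul_lt {a c : ℝ} (h : ∀ s : ℝ, 0 < s → s * a < c) : 0 ≤ c := by
  by_contra! hc
  have ha : a < 0 := by linarith [h 1 one_pos]
  have := h (c / (2 * a)) (div_pos_of_neg_of_neg hc (by linarith))
  rw [div_mul_eq_mul_div, mul_div_mul_right _ _ ha.ne] at this
  linarith

namespace ContinuousMap

variable {K : Type*} [TopologicalSpace K]

lemma convex_setOf_forall_pos : Convex ℝ {f : C(K, ℝ) | ∀ x, 0 < f x} := by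
  simp only [Set.ofPred_forall]
  exact convex_iInter fun x => convex_halfSpace_gt (evalCLM ℝ x).isLinear 0

variable [CompactSpace K]

lemma isOpen_setOf_forall_pos : IsOpen {f : C(K, ℝ) | ∀ x, 0 < f x} := by
  simpa [Set.MapsTo] using
    isOpen_setOfPred_mapsTo (isCompact_univ (X := K)) (isOpen_Ioi (a := (0 : ℝ)))

/-- Round the weights of the convex combination down to multiples of `1 / D`, `D` large. -/
lemma exists_nonpos_of_mem_convexHull {S : Set C(K, ℝ)}
    (hS : ∀ t ∈ AddSubmonoid.closure S, ∃ x, t x ≤ 0) {f : C(K, ℝ)}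
    (hf : f ∈ convexHull ℝ S) : ∃ x, f x ≤ 0 := by
  by_contra! hpos
  obtain ⟨x₀, -⟩ := hS 0 (zero_mem _)
  obtain ⟨xmin, -, hxmin⟩ :=
    isCompact_univ.exists_isMinOn ⟨x₀, trivial⟩ f.continuous.continuousOn
  obtain ⟨ι, _, w, z, hw, -, hz, rfl⟩ := mem_convexHull_iff_exists_fintype.mp hf
  set δ := (∑ i, w i • z i) xmin
  obtain ⟨D, hD⟩ := exists_nat_gt ((∑ i, ‖z i‖) / δ)
  have hδ : 0 < δ := hpos xmin
  obtain ⟨x, hx⟩ := hS (∑ i, ⌊w i * D⌋₊ • z i)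
    (sum_mem fun i _ => nsmul_mem (AddSubmonoid.subset_closure (hz i)) _)
  have hterm (i : ι) : w i * D * z i x - ‖z i‖ ≤ ⌊w i * D⌋₊ * z i x :=
    Nat.mul_sub_le_floor_mul (by have := hw i; positivity) ((z i).norm_coe_le_norm x)
  have hsum : D * δ - ∑ i, ‖z i‖ ≤ ∑ i, ⌊w i * D⌋₊ * z i x := by
    calc D * δ - ∑ i, ‖z i‖ ≤ D * (∑ i, w i • z i) x - ∑ i, ‖z i‖ := by
          gcongr; exact hxmin (Set.mem_univ x)
      _ = ∑ i, (w i * D * z i x - ‖z i‖) := by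
          simp only [coe_sum, Finset.sum_apply, coe_smul, Pi.smul_apply, smul_eq_mul,
            Finset.mul_sum, ← Finset.sum_sub_distrib]
          ring_nf
      _ ≤ _ := Finset.sum_le_sum fun i _ => hterm i
  rw [div_lt_iff₀ hδ] at hD
  simp only [coe_sum, Finset.sum_apply, nsmul_apply] at hx
  simp only [nsmul_eq_mul] at hx
  linarith

lemma exists_positiveLinearMap_of_convexHull {T : Set C(K, ℝ)} (hT₀ : (0 : C(K, ℝ)) ∈ T)
    (hT : ∀ f ∈ convexHull ℝ T, ∃ x, f x ≤ 0) :
    ∃ Λ : C(K, ℝ) →ₚ[ℝ] ℝ, Λ 1 = 1 ∧ ∀ f ∈ T, Λ f ≤ 0 := by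
  have hdisj : Disjoint {f : C(K, ℝ) | ∀ x, 0 < f x} (convexHull ℝ T) :=
    Set.disjoint_left.mpr fun f hf hfT => by
      obtain ⟨x, hx⟩ := hT f hfT
      exact (hf x).not_ge hx
  obtain ⟨φ, c, hφP, hφT⟩ := geometric_hahn_banach_open convex_setOf_forall_pos
    isOpen_setOf_forall_pos (convex_convexHull ℝ T) hdisj
  have hP (f : C(K, ℝ)) (hf : 0 ≤ f) (s : ℝ) (hs : 0 < s) : φ (s • f + 1) < c :=
    hφP _ fun x => by simpa using add_pos_of_nonneg_of_pos (mul_nonneg hs.le (hf x)) one_pos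
  have hφ1 : φ 1 < 0 := by
    have := hφT 0 (subset_convexHull ℝ T hT₀)
    simpa using (hP 0 le_rfl 1 one_pos).trans_le this
  have hc : 0 ≤ c := nonneg_of_forall_pos_mul_lt (a := φ 1) fun s hs => by
    simpa using hφP (s • 1) fun x => by simpa using hs
  have hφpos (f : C(K, ℝ)) (hf : 0 ≤ f) : φ f ≤ 0 :=
    nonpos_of_forall_pos_mul_lt (c := c - φ 1) fun s hs => by
      have := hP f hf s hs
      rw [map_add, map_smul, smul_eq_mul] at this
      linarith
  refine ⟨.mk₀ ((φ 1)⁻¹ • φ.toLinearMap) fun f hf => ?_, ?_, fun f hf => ?_⟩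
  · exact mul_nonneg_of_nonpos_of_nonpos (inv_nonpos.mpr hφ1.le) (hφpos f hf)
  · exact inv_mul_cancel₀ hφ1.ne
  · exact mul_nonpos_of_nonpos_of_nonneg (inv_nonpos.mpr hφ1.le)
      (hc.trans (hφT f (subset_convexHull ℝ T hf)))

lemma exists_positiveLinearMap_of_addSubmonoid_closure {S : Set C(K, ℝ)}
    (hS : ∀ t ∈ AddSubmonoid.closure S, ∃ x, t x ≤ 0) :
    ∃ Λ : C(K, ℝ) →ₚ[ℝ] ℝ, Λ 1 = 1 ∧ ∀ f ∈ S, Λ f ≤ 0 := by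
  have hT (f : C(K, ℝ)) (hf : f ∈ convexHull ℝ (AddSubmonoid.closure S : Set C(K, ℝ))) :
      ∃ x, f x ≤ 0 :=
    exists_nonpos_of_mem_convexHull (by rwa [AddSubmonoid.closure_eq]) hf
  obtain ⟨Λ, hΛ₁, hΛS⟩ := exists_positiveLinearMap_of_convexHull (zero_mem _) hT
  exact ⟨Λ, hΛ₁, fun f hf => hΛS f (AddSubmonoid.subset_closure hf)⟩

lemma exists_regular_isProbabilityMeasure_integral_eq [T2Space K] [MeasurableSpace K]
    [BorelSpace K] (Λ : C(K, ℝ) →ₚ[ℝ] ℝ) (hΛ : Λ 1 = 1) :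
    ∃ ν : Measure K, IsProbabilityMeasure ν ∧ ν.Regular ∧ ∀ f : C(K, ℝ), ∫ x, f x ∂ν = Λ f := by
  let Λc : C_c(K, ℝ) →ₚ[ℝ] ℝ :=
    { toFun f := Λ f
      map_add' f g := map_add Λ (f : C(K, ℝ)) g
      map_smul' c f := map_smul Λ c (f : C(K, ℝ))
      monotone' f g hfg := Λ.monotone' hfg }
  have hΛc (f : C(K, ℝ)) : ∫ x, f x ∂(RealRMK.rieszMeasure Λc) = Λ f :=
    RealRMK.integral_rieszMeasure Λc (CompactlySupportedContinuousMap.continuousMapEquiv f)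
  refine ⟨RealRMK.rieszMeasure Λc, ⟨?_⟩, inferInstance, hΛc⟩
  have := hΛc 1
  simp only [ContinuousMap.one_apply, integral_const, smul_eq_mul, mul_one, hΛ,
    measureReal_def] at this
  exact (ENNReal.toReal_eq_one_iff _).mp this

end ContinuousMap

namespace WeakStarBall

variable {E : Type*} [NormedAddCommGroup E] [NormedSpace ℝ E]

instance : CompactSpace (WeakStarBall E) := by
  have : IsCompact {α : WeakDual ℝ E | ‖WeakDual.toStrongDual α‖ ≤ 1} := by
    simpa [Set.preimage, Metric.closedBall] using
      WeakDual.isCompact_closedBall (0 : StrongDual ℝ E) 1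
  exact isCompact_iff_compactSpace.mp this

instance : T2Space (WeakStarBall E) :=
  inferInstanceAs (T2Space {α : WeakDual ℝ E // ‖WeakDual.toStrongDual α‖ ≤ 1})

instance : Nonempty (WeakStarBall E) := ⟨⟨0, by simp⟩⟩

noncomputable def absRpow {p : ℝ} (hp : 0 ≤ p) (v : E) : C(WeakStarBall E, ℝ) :=
  ⟨fun α => |α.1 v| ^ p,
    ((WeakDual.eval_continuous v).comp continuous_subtype_val).abs.rpow_const fun _ => Or.inr hp⟩

@[simp] lemma absRpow_apply {p : ℝ} (hp : 0 ≤ p) (v : E) (α : WeakStarBall E) :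
    absRpow hp v α = |α.1 v| ^ p := rfl

end WeakStarBall

section Pietsch

variable {E Y : Type*} [NormedAddCommGroup E] [NormedSpace ℝ E] [MetricSpace Y]

def IsLipschitzPSumming (p C : ℝ) (u : E → Y) : Prop :=
  ∀ n : ℕ, ∀ x q : Fin n → E,
    (∑ j, dist (u (x j)) (u (q j)) ^ p) ^ (1 / p) ≤
      C * ⨆ α : WeakStarBall E, (∑ j, |α.1 (x j - q j)| ^ p) ^ (1 / p)

def IsPietschDominated (p C : ℝ) (u : E → Y) (ν : Measure (WeakStarBall E)) : Prop :=
  ∀ x q : E, dist (u x) (u q) ≤ C * (∫ α : WeakStarBall E, |α.1 (x - q)| ^ p ∂ν) ^ (1 / p)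

variable {p C : ℝ} {u : E → Y}

open WeakStarBall

lemma isLipschitzPSumming_iff_forall_exists (hp : 0 < p) (hC : 0 ≤ C) :
    IsLipschitzPSumming p C u ↔ ∀ n : ℕ, ∀ x q : Fin n → E, ∃ α : WeakStarBall E,
      ∑ j, dist (u (x j)) (u (q j)) ^ p ≤ C ^ p * ∑ j, |α.1 (x j - q j)| ^ p :=
  forall_congr' fun _ => forall₂_congr fun x q =>
    Real.rpow_one_div_le_mul_iSup_iff
      (continuous_finsetSum _ fun j _ => (absRpow hp.le (x j - q j)).continuous)
      (fun _ => Finset.sum_nonneg fun _ _ => Real.rpow_nonneg (abs_nonneg _) _)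
      (Finset.sum_nonneg fun _ _ => Real.rpow_nonneg dist_nonneg _) hC hp

lemma IsPietschDominated.isLipschitzPSumming {ν : Measure (WeakStarBall E)}
    [IsProbabilityMeasure ν] (hp : 0 < p) (hC : 0 ≤ C) (h : IsPietschDominated p C u ν) :
    IsLipschitzPSumming p C u := by
  refine (isLipschitzPSumming_iff_forall_exists hp hC).mpr fun n x q => ?_
  have hint (j : Fin n) : Integrable (fun α : WeakStarBall E => |α.1 (x j - q j)| ^ p) ν :=
    (absRpow hp.le (x j - q j)).continuous.integrable_of_hasCompactSupport
      (.of_compactSpace _)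
  obtain ⟨α₀, hα₀⟩ := exists_integral_le (integrable_finsetSum _ fun j _ => hint j)
  refine ⟨α₀, ?_⟩
  calc ∑ j, dist (u (x j)) (u (q j)) ^ p
      ≤ ∑ j, C ^ p * ∫ α : WeakStarBall E, |α.1 (x j - q j)| ^ p ∂ν :=
        Finset.sum_le_sum fun j _ => (Real.le_mul_rpow_one_div_iff dist_nonneg
          (integral_nonneg fun _ => by positivity) hC hp).mp (h (x j) (q j))
    _ = C ^ p * ∫ α : WeakStarBall E, ∑ j, |α.1 (x j - q j)| ^ p ∂ν := by
        rw [integral_finsetSum _ fun j _ => hint j, Finset.mul_sum]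
    _ ≤ C ^ p * ∑ j, |α₀.1 (x j - q j)| ^ p := by gcongr

lemma IsLipschitzPSumming.exists_isPietschDominated (hp : 0 < p) (hC : 0 ≤ C)
    (h : IsLipschitzPSumming p C u) :
    ∃ ν : Measure (WeakStarBall E), IsProbabilityMeasure ν ∧ ν.Regular ∧
      IsPietschDominated p C u ν := by
  let g : E × E → C(WeakStarBall E, ℝ) := fun xq =>
    dist (u xq.1) (u xq.2) ^ p • 1 - C ^ p • absRpow hp.le (xq.1 - xq.2)
  have hsums (t : C(WeakStarBall E, ℝ)) (ht : t ∈ AddSubmonoid.closure (Set.range g)) : ∃ α, t α ≤ 0 := by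
    obtain ⟨n, xq, rfl⟩ := AddSubmonoid.exists_fin_sum_of_mem_closure_range ht
    obtain ⟨α, hα⟩ := (isLipschitzPSumming_iff_forall_exists hp hC).mp h n
      (fun j => (xq j).1) (fun j => (xq j).2)
    refine ⟨α, ?_⟩
    simpa [g, Finset.sum_sub_distrib, Finset.mul_sum] using hα
  obtain ⟨Λ, hΛ₁, hΛg⟩ := ContinuousMap.exists_positiveLinearMap_of_addSubmonoid_closure hsums
  obtain ⟨ν, hν, hνreg, hνΛ⟩ := ContinuousMap.exists_regular_isProbabilityMeasure_integral_eq Λ hΛ₁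
  refine ⟨ν, hν, hνreg, fun x q => ?_⟩
  have hΛxq := hΛg (g (x, q)) ⟨(x, q), rfl⟩
  simp only [g, map_sub, map_smul, hΛ₁, smul_eq_mul, mul_one, sub_nonpos] at hΛxq
  rw [Real.le_mul_rpow_one_div_iff dist_nonneg (integral_nonneg fun _ => by positivity) hC hp]
  exact hΛxq.trans_eq (by rw [← hνΛ]; rfl)

end Pietsch

theorem lipschitz_p_summing_iff_pietsch_domination_general
    {E Y : Type*} [NormedAddCommGroup E] [NormedSpace ℝ E] [MetricSpace Y]
    (p : ℝ) (hp : 1 ≤ p) (u : E → Y) :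
    ((∃ C > (0 : ℝ), ∀ n : ℕ, ∀ x q : Fin n → E,
        (∑ j, dist (u (x j)) (u (q j)) ^ p) ^ (1 / p) ≤
          C * ⨆ α : WeakStarBall E, (∑ j, |α.1 (x j - q j)| ^ p) ^ (1 / p)) ↔
      (∃ C > (0 : ℝ), ∃ ν : Measure (WeakStarBall E), IsProbabilityMeasure ν ∧ ν.Regular ∧
        ∀ x q : E,
          dist (u x) (u q) ≤ C * (∫ α : WeakStarBall E, |α.1 (x - q)| ^ p ∂ν) ^ (1 / p)))
    ∧
    sInf {C : ℝ | 0 < C ∧ ∀ n : ℕ, ∀ x q : Fin n → E,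
        (∑ j, dist (u (x j)) (u (q j)) ^ p) ^ (1 / p) ≤
          C * ⨆ α : WeakStarBall E, (∑ j, |α.1 (x j - q j)| ^ p) ^ (1 / p)} =
      sInf {C : ℝ | 0 < C ∧ ∃ ν : Measure (WeakStarBall E),
        IsProbabilityMeasure ν ∧ ν.Regular ∧
        ∀ x q : E,
          dist (u x) (u q) ≤ C * (∫ α : WeakStarBall E, |α.1 (x - q)| ^ p ∂ν) ^ (1 / p)} := by
  have hp₀ : 0 < p := zero_lt_one.trans_le hp
  have key (C : ℝ) (hC : 0 < C) : IsLipschitzPSumming p C u ↔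
      ∃ ν : Measure (WeakStarBall E), IsProbabilityMeasure ν ∧ ν.Regular ∧
        IsPietschDominated p C u ν :=
    ⟨fun h => h.exists_isPietschDominated hp₀ hC.le,
      fun ⟨_, _, _, h⟩ => h.isLipschitzPSumming hp₀ hC.le⟩
  exact ⟨exists_congr fun C => and_congr_right (key C),
    congrArg sInf (Set.ext fun C => and_congr_right (key C))⟩

/-- **Pietsch domination for Lipschitz `p`-`B_{E*}`-summing maps.**
A Lipschitz map `u : E → Y` is Lipschitz `p`-`B_{E*}`-summing iff there are `C > 0` and a
regular Borel probability measure `ν` on the closed unit ball of `E*` with the weak* topology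
such that `d(u x, u q) ≤ C (∫ |α (x - q)|^p dν(α))^(1/p)` for all `x q`; moreover `π_p^*(u)`
is the infimum of the constants occurring in the domination. -/
theorem lipschitz_p_summing_iff_pietsch_domination
    {E Y : Type*} [NormedAddCommGroup E] [NormedSpace ℝ E] [MetricSpace Y]
    (p : ℝ) (hp : 1 ≤ p) (u : E → Y) (L : NNReal) (hu : LipschitzWith L u) :
    ((∃ C > (0 : ℝ), ∀ n : ℕ, ∀ x q : Fin n → E,
        (∑ j, dist (u (x j)) (u (q j)) ^ p) ^ (1 / p) ≤
          C * ⨆ α : WeakStarBall E, (∑ j, |α.1 (x j - q j)| ^ p) ^ (1 / p)) ↔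
      (∃ C > (0 : ℝ), ∃ ν : Measure (WeakStarBall E), IsProbabilityMeasure ν ∧ ν.Regular ∧
        ∀ x q : E,
          dist (u x) (u q) ≤ C * (∫ α : WeakStarBall E, |α.1 (x - q)| ^ p ∂ν) ^ (1 / p)))
    ∧
    sInf {C : ℝ | 0 < C ∧ ∀ n : ℕ, ∀ x q : Fin n → E,
        (∑ j, dist (u (x j)) (u (q j)) ^ p) ^ (1 / p) ≤
          C * ⨆ α : WeakStarBall E, (∑ j, |α.1 (x j - q j)| ^ p) ^ (1 / p)} =
      sInf {C : ℝ | 0 < C ∧ ∃ ν : Measure (WeakStarBall E),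
        IsProbabilityMeasure ν ∧ ν.Regular ∧
        ∀ x q : E,
          dist (u x) (u q) ≤ C * (∫ α : WeakStarBall E, |α.1 (x - q)| ^ p ∂ν) ^ (1 / p)} :=
  lipschitz_p_summing_iff_pietsch_domination_general p hp u
end

section
/- Let G be a compact Hausdorff topological group, H a closed translation invariant linear subspace of C(G), Y a metric space, 1 ≤ p < ∞ and u : H → Y a translation invariant Lipschitz p-B_{H*}-summing map. Then the normalized Haar measure σ_G on G is a Pietsch measure for u, i.e. d_Y(u(T),u(S)) ≤ π_p^*(u) (∫_G |T(φ) − S(φ)|^p dσ_G(φ))^{1/p} for all T, S ∈ H. -/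
/-!
Averages of left translates approximate the Haar integral uniformly. Since `x ↦ g ∘ (x * ·)` is
continuous into `C(G)`, a fine finite partition of `G` yields a convex combination of translates
of `g = |T - S|^p` lying everywhere below `∫ g dσ + ε` (right invariance of `σ`, automatic on a
compact group, identifies the averaged integral with `∫ g dσ`), and rounding the weights gives
`ψ₁, …, ψₙ` with `∑ⱼ g(ψⱼ φ) ≤ n (∫ g dσ + ε)` for all `φ`. Feed `Tⱼ = T ∘ (ψⱼ ·)` and
`Sⱼ = S ∘ (ψⱼ ·)` into the summing inequality: invariance of `u` turns the left side into
`n^{1/p} d(u T, u S)`, while for `‖α‖ ≤ 1` the sum `∑ⱼ |α(Tⱼ - Sⱼ)|^p` is bounded by the sup over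
`φ` of `∑ⱼ |Tⱼ φ - Sⱼ φ|^p ≤ n (∫ g dσ + ε)`. Cancel `n^{1/p}` and let `ε → 0`.
-/

open MeasureTheory

theorem exists_convex_combination_le_integral_add {X Y : Type*} [TopologicalSpace X]
    [CompactSpace X] [MeasurableSpace X] [OpensMeasurableSpace X] [TopologicalSpace Y]
    [CompactSpace Y] (μ : Measure X) [IsProbabilityMeasure μ] {F : X → C(Y, ℝ)}
    (hF : Continuous F) {ε : ℝ} (hε : 0 < ε) :
    ∃ (k : ℕ) (x : Fin k → X) (w : Fin k → ℝ), (∀ i, 0 ≤ w i) ∧ ∑ i, w i = 1 ∧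
      ∀ y, ∑ i, w i * F (x i) y ≤ ∫ z, F z y ∂μ + ε := by
  obtain ⟨t, ht⟩ := isCompact_univ.elim_finite_subcover (fun x => F ⁻¹' Metric.ball (F x) ε)
    (fun x => Metric.isOpen_ball.preimage hF)
    (fun x _ => Set.mem_iUnion.2 ⟨x, Metric.mem_ball_self hε⟩)
  set x : Fin t.card → X := fun i => t.equivFin.symm i
  set B := disjointed fun i => F ⁻¹' Metric.ball (F (x i)) ε
  have hBmeas : ∀ i, MeasurableSet (B i) := fun i =>
    disjointedRec (fun _ j ht => ht.diff (Metric.isOpen_ball.preimage hF).measurableSet)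
      (Metric.isOpen_ball.preimage hF).measurableSet
  have hBdisj : Pairwise (Function.onFun Disjoint B) := disjoint_disjointed _
  have hBuniv : ⋃ i, B i = Set.univ := by
    refine Set.eq_univ_of_univ_subset (ht.trans fun z hz => ?_)
    obtain ⟨a, ha, hza⟩ := Set.mem_iUnion₂.1 hz
    rw [iUnion_disjointed]
    exact Set.mem_iUnion.2 ⟨t.equivFin ⟨a, ha⟩, by simpa [x] using hza⟩
  refine ⟨t.card, x, fun i => μ.real (B i), fun i => measureReal_nonneg, ?_, fun y => ?_⟩
  · rw [← measureReal_iUnion_fintype hBdisj hBmeas, hBuniv, probReal_univ]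
  have hFy : Integrable (fun z => F z y) μ :=
    ((continuous_eval_const y).comp hF).integrable_of_hasCompactSupport
      (HasCompactSupport.of_compactSpace _)
  have hint : Integrable (fun z => F z y + ε) μ := hFy.add (integrable_const ε)
  have hclose : ∀ i, ∀ z ∈ B i, F (x i) y ≤ F z y + ε := fun i z hz => by
    have := (ContinuousMap.dist_apply_le_dist y).trans_lt
      (Metric.mem_ball'.1 (disjointed_subset _ i hz))
    linarith [(abs_lt.1 (Real.dist_eq _ _ ▸ this)).2]
  calc ∑ i, μ.real (B i) * F (x i) y = ∑ i, ∫ _ in B i, F (x i) y ∂μ := by simp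
    _ ≤ ∑ i, ∫ z in B i, (F z y + ε) ∂μ := Finset.sum_le_sum fun i _ =>
        setIntegral_mono_on (integrableOn_const (measure_ne_top μ _)) hint.integrableOn
          (hBmeas i) (hclose i)
    _ = ∫ z, (F z y + ε) ∂μ := by
        rw [← integral_iUnion_fintype hBmeas hBdisj (fun i => hint.integrableOn), hBuniv,
          Measure.restrict_univ]
    _ = ∫ z, F z y ∂μ + ε := by
        rw [integral_add hFy (integrable_const ε)]
        simp

theorem exists_fin_sum_le_of_weighted_sum_le {k : ℕ} {Y : Type*} (f : Fin k → Y → ℝ) {B : ℝ}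
    (hf0 : ∀ i y, 0 ≤ f i y) (hfB : ∀ i y, f i y ≤ B) {w : Fin k → ℝ} (hw0 : ∀ i, 0 ≤ w i)
    (hw1 : ∑ i, w i = 1) {c : ℝ} (hc : ∀ y, ∑ i, w i * f i y ≤ c) {ε : ℝ} (hε : 0 < ε) :
    ∃ n > 0, ∃ a : Fin n → Fin k, ∀ y, ∑ j, f (a j) y ≤ n * (c + ε) := by
  -- round `N • w` up to integer multiplicities; the rounding costs at most `k * B ≤ N * ε`
  set N : ℕ := ⌈k * B / ε⌉₊ + 1
  have hN : k * B ≤ N * ε := by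
    rw [← div_le_iff₀ hε]
    exact (Nat.le_ceil _).trans (by simp [N])
  set m : Fin k → ℕ := fun i => ⌈N * w i⌉₊
  have hm_ge : ∀ i, N * w i ≤ m i := fun i => Nat.le_ceil _
  have hm_le : ∀ i, (m i : ℝ) ≤ N * w i + 1 := fun i =>
    (Nat.ceil_lt_add_one (mul_nonneg N.cast_nonneg (hw0 i))).le
  have hNn : (N : ℝ) ≤ ((∑ i, m i : ℕ) : ℝ) := by
    push_cast
    calc (N : ℝ) = ∑ i, N * w i := by rw [← Finset.mul_sum, hw1, mul_one]
      _ ≤ ∑ i, (m i : ℝ) := Finset.sum_le_sum fun i _ => hm_ge i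
  have hn_pos : 0 < ∑ i, m i := by
    exact_mod_cast (show (0 : ℝ) < N by positivity).trans_le hNn
  refine ⟨∑ i, m i, hn_pos, fun j => (finSigmaFinEquiv.symm j).1, fun y => ?_⟩
  have hc0 : 0 ≤ c :=
    (Finset.sum_nonneg fun i _ => mul_nonneg (hw0 i) (hf0 i y)).trans (hc y)
  calc ∑ j, f (finSigmaFinEquiv.symm j).1 y = ∑ i, (m i : ℝ) * f i y := by
        rw [← finSigmaFinEquiv.sum_comp, Fintype.sum_sigma]
        simp
    _ ≤ ∑ i, (N * w i + 1) * f i y :=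
        Finset.sum_le_sum fun i _ => mul_le_mul_of_nonneg_right (hm_le i) (hf0 i y)
    _ = N * ∑ i, w i * f i y + ∑ i, f i y := by
        simp only [add_mul, one_mul, mul_assoc, Finset.sum_add_distrib, Finset.mul_sum]
    _ ≤ N * c + k * B := by
        gcongr
        · exact hc y
        · simpa using Finset.sum_le_sum fun i (_ : i ∈ Finset.univ) => hfB i y
    _ ≤ N * (c + ε) := by linarith
    _ ≤ (∑ i, m i : ℕ) * (c + ε) := by gcongr

theorem Real.rpow_sub_one_mul_le {p a b : ℝ} (hp : 1 ≤ p) (ha : 0 ≤ a) (hb : 0 ≤ b) :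
    a ^ (p - 1) * b ≤ (p - 1) / p * a ^ p + 1 / p * b ^ p := by
  have hp0 : 0 < p := zero_lt_one.trans_le hp
  have young := Real.geom_mean_le_arith_mean2_weighted (w₁ := (p - 1) / p) (w₂ := 1 / p)
    (div_nonneg (sub_nonneg.2 hp) hp0.le) (one_div_nonneg.2 hp0.le) (Real.rpow_nonneg ha p)
    (Real.rpow_nonneg hb p) (by field_simp; ring)
  rwa [← Real.rpow_mul ha, ← Real.rpow_mul hb, mul_div_cancel₀ _ hp0.ne',
    mul_one_div_cancel hp0.ne', Real.rpow_one] at young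

theorem sum_abs_rpow_le_of_forall_sum_abs_rpow_apply_le {Y ι : Type*} [TopologicalSpace Y]
    [CompactSpace Y] [Fintype ι] {H : Submodule ℝ C(Y, ℝ)} (α : H →ₗ[ℝ] ℝ)
    (hα : ∀ f, |α f| ≤ ‖f‖) {p : ℝ} (hp : 1 ≤ p) (R : ι → H) {M : ℝ} (hM : 0 ≤ M)
    (hR : ∀ y, ∑ j, |(R j : C(Y, ℝ)) y| ^ p ≤ M) :
    ∑ j, |α (R j)| ^ p ≤ M := by
  have hp0 : 0 < p := zero_lt_one.trans_le hp
  set A := ∑ j, |α (R j)| ^ p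
  -- `α` takes the value `A` at `∑ j, c j • R j`, whose norm Young's inequality bounds by
  -- `(p - 1) / p * A + M / p`
  set c : ι → ℝ := fun j => SignType.sign (α (R j)) * |α (R j)| ^ (p - 1)
  have hcα : ∀ j, c j * α (R j) = |α (R j)| ^ p := fun j => by
    rw [mul_right_comm, sign_mul_self, ← Real.rpow_one_add' (abs_nonneg _) (by linarith),
      add_sub_cancel]
  have hc_abs : ∀ j, |c j| ≤ |α (R j)| ^ (p - 1) := fun j => by
    rw [abs_mul, abs_of_nonneg (Real.rpow_nonneg (abs_nonneg _) _)]
    refine mul_le_of_le_one_left (Real.rpow_nonneg (abs_nonneg _) _) ?_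
    rcases SignType.sign (α (R j)) with _ | _ | _ <;> simp
  have hnorm : ‖∑ j, c j • R j‖ ≤ (p - 1) / p * A + 1 / p * M := by
    refine (ContinuousMap.norm_le _ (by positivity)).2 fun y => ?_
    calc ‖((∑ j, c j • R j : H) : C(Y, ℝ)) y‖ = |∑ j, c j * (R j : C(Y, ℝ)) y| := by simp
      _ ≤ ∑ j, |α (R j)| ^ (p - 1) * |(R j : C(Y, ℝ)) y| := by
        refine (Finset.abs_sum_le_sum_abs _ _).trans (Finset.sum_le_sum fun j _ => ?_)
        rw [abs_mul]
        exact mul_le_mul_of_nonneg_right (hc_abs j) (abs_nonneg _)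
      _ ≤ ∑ j, ((p - 1) / p * |α (R j)| ^ p + 1 / p * |(R j : C(Y, ℝ)) y| ^ p) :=
        Finset.sum_le_sum fun j _ =>
          Real.rpow_sub_one_mul_le hp (abs_nonneg _) (abs_nonneg _)
      _ ≤ (p - 1) / p * A + 1 / p * M := by
        rw [Finset.sum_add_distrib, ← Finset.mul_sum, ← Finset.mul_sum]
        gcongr
        exact hR y
  have hA : A ≤ (p - 1) / p * A + 1 / p * M := by
    calc A = α (∑ j, c j • R j) := by simp [A, map_sum, hcα]
      _ ≤ ‖∑ j, c j • R j‖ := (le_abs_self _).trans (hα _)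
      _ ≤ _ := hnorm
  have : A / p ≤ M / p := by
    field_simp at hA ⊢
    linarith
  exact (div_le_div_iff_of_pos_right hp0).1 this

def LipschitzSummingWith {E Y : Type*} [SeminormedAddCommGroup E] [NormedSpace ℝ E]
    [PseudoMetricSpace Y] (p C : ℝ) (u : E → Y) : Prop :=
  ∀ n (T S : Fin n → E), (∑ j, dist (u (T j)) (u (S j)) ^ p) ^ (1 / p) ≤
    C * ⨆ α : {α : E →L[ℝ] ℝ // ‖α‖ ≤ 1}, (∑ j, |α.1 (T j - S j)| ^ p) ^ (1 / p)

theorem LipschitzSummingWith.sum_dist_rpow_le {E Y : Type*} [SeminormedAddCommGroup E]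
    [NormedSpace ℝ E] [PseudoMetricSpace Y] {p C : ℝ} {u : E → Y} (hC : LipschitzSummingWith p C u)
    (hp : 0 ≤ p) (hC0 : 0 ≤ C) {n : ℕ} (T S : Fin n → E) {M : ℝ}
    (hM : ∀ α : E →L[ℝ] ℝ, ‖α‖ ≤ 1 → ∑ j, |α (T j - S j)| ^ p ≤ M) :
    (∑ j, dist (u (T j)) (u (S j)) ^ p) ^ (1 / p) ≤ C * M ^ (1 / p) := by
  have : Nonempty {α : E →L[ℝ] ℝ // ‖α‖ ≤ 1} := ⟨⟨0, by simp⟩⟩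
  refine (hC n T S).trans (mul_le_mul_of_nonneg_left (ciSup_le fun α => ?_) hC0)
  exact Real.rpow_le_rpow (by positivity) (hM α.1 α.2) (by positivity)

theorem continuous_comp_mulLeft {G E : Type*} [Group G] [TopologicalSpace G] [ContinuousMul G]
    [TopologicalSpace E] (g : C(G, E)) :
    Continuous fun ψ : G => g.comp (Homeomorph.mulLeft ψ : C(G, G)) :=
  ContinuousMap.continuous_of_continuous_uncurry _ (g.continuous.comp continuous_mul)

section CompactGroup

variable {G : Type*} [Group G] [TopologicalSpace G] [IsTopologicalGroup G] [CompactSpace G]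
  [MeasurableSpace G] [BorelSpace G]

theorem isMulRightInvariant_of_compactSpace (μ : Measure G) [IsProbabilityMeasure μ]
    [μ.IsMulLeftInvariant] : μ.IsMulRightInvariant := by
  have : μ.IsHaarMeasure := { }
  refine ⟨fun g => ?_⟩
  have hmap := Measure.isMulInvariant_eq_smul_of_compactSpace (μ.map (· * g)) μ
  have hfactor : (μ.map (· * g)).haarScalarFactor μ = 1 := by
    have huniv := congrArg (· Set.univ) hmap
    simp only [Measure.map_apply (measurable_mul_const g) MeasurableSet.univ, Set.preimage_univ,
      measure_univ, Measure.smul_apply, ENNReal.smul_def, smul_eq_mul, mul_one] at huniv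
    exact_mod_cast huniv.symm
  rw [hmap, hfactor, one_smul]

theorem exists_translates_sum_le_integral_add (σ : Measure G) [IsProbabilityMeasure σ]
    [σ.IsMulLeftInvariant] (g : C(G, ℝ)) (hg : ∀ φ, 0 ≤ g φ) {ε : ℝ} (hε : 0 < ε) :
    ∃ n > 0, ∃ ψ : Fin n → G, ∀ φ, ∑ j, g (ψ j * φ) ≤ n * (∫ x, g x ∂σ + ε) := by
  have := isMulRightInvariant_of_compactSpace σ
  obtain ⟨k, x, w, hw0, hw1, hw⟩ := exists_convex_combination_le_integral_add σ
    (continuous_comp_mulLeft g) (half_pos hε)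
  simp only [ContinuousMap.comp_apply, ContinuousMap.coe_coe, Homeomorph.coe_mulLeft,
    integral_mul_right_eq_self (fun x => g x)] at hw
  obtain ⟨n, hn, a, ha⟩ := exists_fin_sum_le_of_weighted_sum_le (fun i φ => g (x i * φ))
    (fun i φ => hg _) (fun i φ => (le_abs_self _).trans (g.norm_coe_le_norm _)) hw0 hw1 hw
    (half_pos hε)
  exact ⟨n, hn, fun j => x (a j), fun φ => (ha φ).trans_eq (by ring)⟩

theorem dist_le_mul_integral_rpow_of_lipschitzSummingWith {Y : Type*} [PseudoMetricSpace Y]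
    (σ : Measure G) [IsProbabilityMeasure σ] [σ.IsMulLeftInvariant] {H : Submodule ℝ C(G, ℝ)}
    (hH : ∀ (ψ : G) (T : C(G, ℝ)), T ∈ H → T.comp (Homeomorph.mulLeft ψ : C(G, G)) ∈ H)
    {p : ℝ} (hp : 1 ≤ p) {u : H → Y}
    (hu : ∀ (ψ : G) (T : H),
      u ⟨(T : C(G, ℝ)).comp (Homeomorph.mulLeft ψ : C(G, G)), hH ψ T T.2⟩ = u T)
    {C : ℝ} (hC0 : 0 ≤ C) (hC : LipschitzSummingWith p C u) (T S : H) :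
    dist (u T) (u S) ≤ C * (∫ φ, |(T : C(G, ℝ)) φ - (S : C(G, ℝ)) φ| ^ p ∂σ) ^ (1 / p) := by
  have hp0 : 0 < p := zero_lt_one.trans_le hp
  set g : C(G, ℝ) := ⟨fun φ => |(T : C(G, ℝ)) φ - (S : C(G, ℝ)) φ| ^ p,
    ((T : C(G, ℝ)).continuous.sub (S : C(G, ℝ)).continuous).abs.rpow_const
      fun _ => Or.inr hp0.le⟩
  set I := ∫ φ, g φ ∂σ
  have hI : 0 ≤ I := integral_nonneg fun φ => Real.rpow_nonneg (abs_nonneg _) p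
  have hbound : ∀ ε > 0, dist (u T) (u S) ≤ C * (I + ε) ^ (1 / p) := fun ε hε => by
    obtain ⟨n, hn, ψ, hψ⟩ := exists_translates_sum_le_integral_add σ g
      (fun φ => Real.rpow_nonneg (abs_nonneg _) p) hε
    have hsum := hC.sum_dist_rpow_le hp0.le hC0 (fun j => ⟨_, hH (ψ j) T T.2⟩)
      (fun j => ⟨_, hH (ψ j) S S.2⟩) (M := n * (I + ε)) fun α hα =>
        sum_abs_rpow_le_of_forall_sum_abs_rpow_apply_le α.toLinearMap
          (fun f => (α.le_opNorm f).trans (mul_le_of_le_one_left (norm_nonneg f) hα)) hp _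
          (by positivity) fun φ => (hψ φ).trans_eq' (by simp [g])
    simp only [hu, Finset.sum_const, Finset.card_univ, Fintype.card_fin, nsmul_eq_mul] at hsum
    rw [Real.mul_rpow (by positivity) (by positivity),
      Real.mul_rpow (by positivity) (by positivity), one_div, Real.rpow_rpow_inv dist_nonneg hp0.ne', ← one_div, mul_left_comm] at hsum
    exact le_of_mul_le_mul_left hsum (by positivity)
  have hlim : Filter.Tendsto (fun ε => C * (I + ε) ^ (1 / p)) (nhdsWithin 0 (Set.Ioi 0))
      (nhds (C * I ^ (1 / p))) := by
    have : ContinuousAt (fun ε => C * (I + ε) ^ (1 / p)) 0 :=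
      continuousAt_const.mul ((continuousAt_const.add continuousAt_id).rpow_const
        (Or.inr (by positivity)))
    simpa using this.tendsto.mono_left nhdsWithin_le_nhds
  exact ge_of_tendsto hlim (eventually_nhdsWithin_of_forall hbound)

end CompactGroup

theorem haar_is_pietsch_measure_lipschitz_general
    {G Y : Type*} [Group G] [TopologicalSpace G] [IsTopologicalGroup G]
    [CompactSpace G] [MeasurableSpace G] [BorelSpace G] [MetricSpace Y]
    (σ : Measure G) [IsProbabilityMeasure σ] [σ.IsMulLeftInvariant]
    (H : Subspace ℝ C(G, ℝ))
    -- `H` is translation invariant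
    (hHinv : ∀ (ψ : G) (T : C(G, ℝ)), T ∈ H →
      T.comp (Homeomorph.mulLeft ψ : C(G, G)) ∈ H)
    (p : ℝ) (hp : 1 ≤ p) (u : H → Y) (L : NNReal)
    -- `u` is translation invariant
    (huinv : ∀ (ψ : G) (T : H),
      u ⟨(T : C(G, ℝ)).comp (Homeomorph.mulLeft ψ : C(G, G)), hHinv ψ T T.2⟩ = u T)
    -- `u` is Lipschitz `p`-`B_{H*}`-summing
    (husum : ∃ C > (0 : ℝ), ∀ n : ℕ, ∀ T S : Fin n → H,
      (∑ j, dist (u (T j)) (u (S j)) ^ p) ^ (1 / p) ≤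
        C * ⨆ α : {α : H →L[ℝ] ℝ // @norm _ (ContinuousLinearMap.hasOpNorm (𝕜 := ℝ) (𝕜₂ := ℝ) (σ₁₂ := RingHom.id ℝ) (E := H) (F := ℝ)) α ≤ 1},
          (∑ j, |α.1 (T j - S j)| ^ p) ^ (1 / p)) :
    ∀ T S : H, dist (u T) (u S) ≤
      sInf {C : ℝ | 0 < C ∧ ∀ n : ℕ, ∀ T S : Fin n → H,
          (∑ j, dist (u (T j)) (u (S j)) ^ p) ^ (1 / p) ≤
            C * ⨆ α : {α : H →L[ℝ] ℝ // @norm _ (ContinuousLinearMap.hasOpNorm (𝕜 := ℝ) (𝕜₂ := ℝ) (σ₁₂ := RingHom.id ℝ) (E := H) (F := ℝ)) α ≤ 1},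
              (∑ j, |α.1 (T j - S j)| ^ p) ^ (1 / p)} *
        (∫ φ, |(T : C(G, ℝ)) φ - (S : C(G, ℝ)) φ| ^ p ∂σ) ^ (1 / p) := by
  intro T S
  have hJ : 0 ≤ (∫ φ, |(T : C(G, ℝ)) φ - (S : C(G, ℝ)) φ| ^ p ∂σ) ^ (1 / p) :=
    Real.rpow_nonneg (integral_nonneg fun _ => Real.rpow_nonneg (abs_nonneg _) p) _
  rw [mul_comm, ← smul_eq_mul, ← Real.sInf_smul_of_nonneg hJ]
  refine le_csInf (Set.Nonempty.smul_set husum) ?_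
  rintro _ ⟨C, ⟨hC0, hC⟩, rfl⟩
  exact (dist_le_mul_integral_rpow_of_lipschitzSummingWith σ hHinv hp huinv hC0.le hC T S
    ).trans_eq (mul_comm _ _)

/-- Let `G` be a compact Hausdorff topological group, `H` a closed translation
invariant subspace of `C(G)`, `Y` a metric space, `1 ≤ p < ∞` and `u : H → Y` a translation
invariant Lipschitz `p`-`B_{H*}`-summing map. Then the normalized Haar measure `σ` on `G` is a
Pietsch measure for `u`. -/
theorem haar_is_pietsch_measure_lipschitz
    {G Y : Type*} [Group G] [TopologicalSpace G] [IsTopologicalGroup G]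
    [CompactSpace G] [T2Space G] [MeasurableSpace G] [BorelSpace G] [MetricSpace Y]
    (σ : Measure G) [IsProbabilityMeasure σ] [σ.IsMulLeftInvariant] [σ.Regular]
    (H : Subspace ℝ C(G, ℝ)) (hHclosed : IsClosed (H : Set C(G, ℝ)))
    -- `H` is translation invariant
    (hHinv : ∀ (ψ : G) (T : C(G, ℝ)), T ∈ H →
      T.comp (Homeomorph.mulLeft ψ : C(G, G)) ∈ H)
    (p : ℝ) (hp : 1 ≤ p) (u : H → Y) (L : NNReal) (hu : LipschitzWith L u)
    -- `u` is translation invariant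
    (huinv : ∀ (ψ : G) (T : H),
      u ⟨(T : C(G, ℝ)).comp (Homeomorph.mulLeft ψ : C(G, G)), hHinv ψ T T.2⟩ = u T)
    -- `u` is Lipschitz `p`-`B_{H*}`-summing
    (husum : ∃ C > (0 : ℝ), ∀ n : ℕ, ∀ T S : Fin n → H,
      (∑ j, dist (u (T j)) (u (S j)) ^ p) ^ (1 / p) ≤
        C * ⨆ α : {α : H →L[ℝ] ℝ // @norm _ (ContinuousLinearMap.hasOpNorm (𝕜 := ℝ) (𝕜₂ := ℝ) (σ₁₂ := RingHom.id ℝ) (E := H) (F := ℝ)) α ≤ 1},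
          (∑ j, |α.1 (T j - S j)| ^ p) ^ (1 / p)) :
    ∀ T S : H, dist (u T) (u S) ≤
      sInf {C : ℝ | 0 < C ∧ ∀ n : ℕ, ∀ T S : Fin n → H,
          (∑ j, dist (u (T j)) (u (S j)) ^ p) ^ (1 / p) ≤
            C * ⨆ α : {α : H →L[ℝ] ℝ // @norm _ (ContinuousLinearMap.hasOpNorm (𝕜 := ℝ) (𝕜₂ := ℝ) (σ₁₂ := RingHom.id ℝ) (E := H) (F := ℝ)) α ≤ 1},
              (∑ j, |α.1 (T j - S j)| ^ p) ^ (1 / p)} *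
        (∫ φ, |(T : C(G, ℝ)) φ - (S : C(G, ℝ)) φ| ^ p ∂σ) ^ (1 / p) :=
  haar_is_pietsch_measure_lipschitz_general σ H hHinv p hp u L huinv husum
end

section
/- Let m ∈ ℕ, G₁,…,Gₘ be compact Hausdorff topological groups, Hᵢ a closed translation invariant linear subspace of C(Gᵢ) for each i ∈ {1,…,m}, F a Banach space, Φ : [0,∞) → [0,∞) a normalized Orlicz function, and u : H₁ × ⋯ × Hₘ → F a translation m-invariant Φ-summing continuous m-linear operator. Then the normalized Haar measure σ_G on G = G₁ × ⋯ × Gₘ is a Pietsch measure for u: ‖u(T₁,…,Tₘ)‖_F ≤ π_Φ(u) · ‖⊙(T₁,…,Tₘ)‖_{L_Φ(σ_G)} for all (T₁,…,Tₘ) ∈ H₁ × ⋯ × Hₘ, where ⊙(T₁,…,Tₘ)(φ₁,…,φₘ) = T₁(φ₁)⋯Tₘ(φₘ) and ‖g‖_{L_Φ(σ_G)} = inf{ε > 0 : ∫_G Φ(|g(φ)|/ε) dσ_G(φ) ≤ 1} is the Luxemburg norm. -/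
open MeasureTheory

/-- The `n`-dimensional Orlicz sequence norm `‖x‖_{ℓ_Φ^n(w)}` with weights `w`. -/
noncomputable def orliczSeqNorm (Φ : ℝ → ℝ) {n : ℕ} (w : Fin n → ℝ) (x : Fin n → ℝ) : ℝ :=
  sInf {ε : ℝ | 0 < ε ∧ ∑ j, Φ (|x j| / ε) * w j ≤ 1}

/-- The Luxemburg norm `‖g‖_{L_Φ(σ)}` of a function `g` with respect to a measure `σ`. -/
noncomputable def luxemburgNorm {G : Type*} [MeasurableSpace G] (Φ : ℝ → ℝ) (σ : Measure G)
    (g : G → ℝ) : ℝ :=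
  sInf {ε : ℝ | 0 < ε ∧ ∫ φ, Φ (|g φ| / ε) ∂σ ≤ 1}

/-!
Write `g = ⊙(T₁,…,Tₘ)` and fix `ε` above its Luxemburg norm, so that `∫ Φ(|g|/ε) dσ < 1`. On a
compact group `σ` is also right invariant and `Φ(|g|/ε)` is uniformly continuous, so a Riemann sum
over a fine measurable partition yields probability weights `wⱼ` and points `φⱼ` with
`∑ⱼ Φ(|g(φⱼ a)|/ε) wⱼ ≤ 1` for every `a`. Feed the translates `xⱼ = T(φⱼ ·)` into the `Φ`-summing
inequality. By invariance `u(xⱼ) = u(T)`, so its left side is at least `‖u(T)‖`. On its right side,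
the set `{z | ∑ⱼ Φ(|zⱼ|/ε) wⱼ ≤ 1}` is closed, convex and symmetric, hence cut out by linear
functionals (Hahn–Banach); since a norm-one functional on a subspace of `C(Gᵢ)` is dominated by the
sup norm, replacing point evaluations by such functionals one coordinate at a time keeps every
product `∏ᵢ αᵢ(xⱼ,ᵢ)` inside that set. Hence `‖u(T)‖ ≤ C ε` for every admissible constant `C`.
-/

open Set

section OrliczFunction

variable {Φ : ℝ → ℝ}

lemma ConvexOn.map_mul_le_of_map_zero (hconv : ConvexOn ℝ (Ici 0) Φ) (h0 : Φ 0 = 0)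
    {l s : ℝ} (hl0 : 0 ≤ l) (hl1 : l ≤ 1) (hs : 0 ≤ s) : Φ (l * s) ≤ l * Φ s := by
  simpa [h0] using hconv.2 (mem_Ici.2 hs) (mem_Ici.2 le_rfl) hl0 (sub_nonneg.2 hl1)
    (add_sub_cancel l 1)

lemma ConvexOn.one_lt_map_of_one_lt (hconv : ConvexOn ℝ (Ici 0) Φ) (h0 : Φ 0 = 0)
    (h1 : Φ 1 = 1) {s : ℝ} (hs : 1 < s) : 1 < Φ s := by
  have hs0 : 0 < s := one_pos.trans hs
  have h := hconv.map_mul_le_of_map_zero h0 (inv_nonneg.2 hs0.le) (inv_le_one_of_one_le₀ hs.le)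
    hs0.le
  rw [inv_mul_cancel₀ hs0.ne', h1, le_inv_mul_iff₀ hs0, mul_one] at h
  exact hs.trans_le h

lemma convexOn_univ_phi_abs_div (hconv : ConvexOn ℝ (Ici 0) Φ)
    (hmono : MonotoneOn Φ (Ici 0)) {ε : ℝ} (hε : 0 < ε) :
    ConvexOn ℝ univ fun x : ℝ => Φ (|x| / ε) := by
  refine ⟨convex_univ, fun x _ y _ a b ha hb hab => ?_⟩
  simp only [smul_eq_mul]
  have htri : |a * x + b * y| / ε ≤ a * (|x| / ε) + b * (|y| / ε) := by
    rw [mul_div_assoc', mul_div_assoc', ← add_div]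
    gcongr
    calc |a * x + b * y| ≤ |a * x| + |b * y| := abs_add_le _ _
      _ = a * |x| + b * |y| := by rw [abs_mul, abs_mul, abs_of_nonneg ha, abs_of_nonneg hb]
  calc Φ (|a * x + b * y| / ε) ≤ Φ (a * (|x| / ε) + b * (|y| / ε)) :=
        hmono (mem_Ici.2 (by positivity)) (mem_Ici.2 (by positivity)) htri
    _ ≤ a * Φ (|x| / ε) + b * Φ (|y| / ε) :=
        hconv.2 (mem_Ici.2 (by positivity)) (mem_Ici.2 (by positivity)) ha hb hab

variable {J : Type*} [Fintype J]

lemma convex_setOf_sum_phi_le (hconv : ConvexOn ℝ (Ici 0) Φ) (hmono : MonotoneOn Φ (Ici 0))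
    {w : J → ℝ} (hw : ∀ j, 0 ≤ w j) {ε : ℝ} (hε : 0 < ε) (r : ℝ) :
    Convex ℝ {z : J → ℝ | ∑ j, Φ (|z j| / ε) * w j ≤ r} := by
  have hsum : ConvexOn ℝ univ fun z : J → ℝ => ∑ j, Φ (|z j| / ε) * w j := by
    refine ⟨convex_univ, fun z₁ _ z₂ _ a b ha hb hab => ?_⟩
    simp only [smul_eq_mul, Finset.mul_sum, ← Finset.sum_add_distrib]
    refine Finset.sum_le_sum fun j _ => ?_
    have h := (convexOn_univ_phi_abs_div hconv hmono hε).2 (mem_univ (z₁ j)) (mem_univ (z₂ j))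
      ha hb hab
    simp only [smul_eq_mul] at h
    calc Φ (|(a • z₁ + b • z₂) j| / ε) * w j
        ≤ (a * Φ (|z₁ j| / ε) + b * Φ (|z₂ j| / ε)) * w j := mul_le_mul_of_nonneg_right h (hw j)
      _ = _ := by ring
  simpa using hsum.convex_le r

lemma isClosed_setOf_sum_phi_le (hcont : ContinuousOn Φ (Ici 0)) (w : J → ℝ) {ε : ℝ}
    (hε : 0 < ε) (r : ℝ) : IsClosed {z : J → ℝ | ∑ j, Φ (|z j| / ε) * w j ≤ r} := by
  refine isClosed_le (continuous_finsetSum _ fun j _ => ?_) continuous_const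
  exact (hcont.comp_continuous (by fun_prop) fun z => mem_Ici.2 (by positivity)).mul
    continuous_const

end OrliczFunction

section OrliczNorms

variable {Φ : ℝ → ℝ}

lemma orliczSeqNorm_le {n : ℕ} {w x : Fin n → ℝ} {ε : ℝ} (hε : 0 < ε)
    (h : ∑ j, Φ (|x j| / ε) * w j ≤ 1) : orliczSeqNorm Φ w x ≤ ε :=
  csInf_le ⟨0, fun _ hy => hy.1.le⟩ ⟨hε, h⟩

lemma le_orliczSeqNorm_const (hconv : ConvexOn ℝ (Ici 0) Φ) (h0 : Φ 0 = 0) (h1 : Φ 1 = 1)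
    {n : ℕ} {w : Fin n → ℝ} (hw : ∑ j, w j = 1) {t : ℝ} (ht : 0 ≤ t) :
    t ≤ orliczSeqNorm Φ w fun _ => t := by
  have hsum (ε : ℝ) : ∑ j, Φ (|t| / ε) * w j = Φ (|t| / ε) := by
    rw [← Finset.mul_sum, hw, mul_one]
  rcases ht.eq_or_lt with rfl | ht
  · exact Real.sInf_nonneg fun _ hε => hε.1.le
  refine le_csInf ⟨t, ht, ?_⟩ fun ε ⟨hε, hle⟩ => ?_
  · rw [hsum, abs_of_pos ht, div_self ht.ne', h1]
  · by_contra! hlt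
    rw [hsum] at hle
    have := hconv.one_lt_map_of_one_lt h0 h1
      (show 1 < |t| / ε by rwa [one_lt_div hε, abs_of_pos ht])
    linarith

lemma luxemburgNorm_nonneg {K : Type*} [MeasurableSpace K] (Φ : ℝ → ℝ)
    (σ : Measure K) (g : K → ℝ) : 0 ≤ luxemburgNorm Φ σ g :=
  Real.sInf_nonneg fun _ hε => hε.1.le

variable {K : Type*} [TopologicalSpace K] [CompactSpace K] [MeasurableSpace K]
  [OpensMeasurableSpace K] (σ : Measure K) [IsProbabilityMeasure σ]

lemma integral_phi_div_lt_one_of_luxemburgNorm_lt (hconv : ConvexOn ℝ (Ici 0) Φ)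
    (hmono : MonotoneOn Φ (Ici 0)) (hcont : ContinuousOn Φ (Ici 0)) (h0 : Φ 0 = 0)
    (h1 : Φ 1 = 1) {g : K → ℝ} (hg : Continuous g) {ε : ℝ} (hε : luxemburgNorm Φ σ g < ε) :
    ∫ z, Φ (|g z| / ε) ∂σ < 1 := by
  have hint {δ : ℝ} (hδ : 0 < δ) : Integrable (fun z => Φ (|g z| / δ)) σ :=
    Continuous.integrable_of_hasCompactSupport
      (hcont.comp_continuous (by fun_prop) fun z => mem_Ici.2 (by positivity))
      (HasCompactSupport.of_compactSpace _)
  have hne : {δ : ℝ | 0 < δ ∧ ∫ z, Φ (|g z| / δ) ∂σ ≤ 1}.Nonempty := by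
    set M := max ‖(⟨g, hg⟩ : C(K, ℝ))‖ 1
    have hM : 0 < M := one_pos.trans_le (le_max_right _ _)
    refine ⟨M, hM, (integral_mono (hint hM) (integrable_const 1) fun z => ?_).trans (by simp)⟩
    refine h1 ▸ hmono (mem_Ici.2 (by positivity)) (mem_Ici.2 zero_le_one) ?_
    rw [div_le_one hM]
    exact ((ContinuousMap.norm_coe_le_norm ⟨g, hg⟩ z).trans (le_max_left _ _))
  obtain ⟨ε₀, ⟨hε₀, hint₀⟩, hε₀ε⟩ := exists_lt_of_csInf_lt hne hε
  have hεpos : 0 < ε := hε₀.trans hε₀ε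
  have hratio : ε₀ / ε < 1 := (div_lt_one hεpos).2 hε₀ε
  calc ∫ z, Φ (|g z| / ε) ∂σ ≤ ∫ z, ε₀ / ε * Φ (|g z| / ε₀) ∂σ := by
        refine integral_mono (hint hεpos) ((hint hε₀).const_mul _) fun z => ?_
        have hz : |g z| / ε = ε₀ / ε * (|g z| / ε₀) := by field_simp
        rw [hz]
        exact hconv.map_mul_le_of_map_zero h0 (by positivity) hratio.le (by positivity)
    _ = ε₀ / ε * ∫ z, Φ (|g z| / ε₀) ∂σ := integral_const_mul _ _
    _ ≤ ε₀ / ε * 1 := by gcongr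
    _ < 1 := by rwa [mul_one]

end OrliczNorms

section DualEvaluation

-- Instance search does not find the operator norm on `StrongDual ℝ H` for a `Subspace` `H` of
-- `C(X, ℝ)`, so it is spelled out.
abbrev DualUnitBall {X : Type*} [TopologicalSpace X] [CompactSpace X] (H : Subspace ℝ C(X, ℝ)) :=
  {a : StrongDual ℝ H // @norm _ (@ContinuousLinearMap.hasOpNorm ℝ ℝ H ℝ
    (Submodule.seminormedAddCommGroup H) _ _ _ (Submodule.normedSpace H) _ _) a ≤ 1}

instance {X : Type*} [TopologicalSpace X] [CompactSpace X] (H : Subspace ℝ C(X, ℝ)) :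
    Nonempty (DualUnitBall H) :=
  ⟨⟨0, by simp⟩⟩

lemma DualUnitBall.abs_apply_le {X : Type*} [TopologicalSpace X] [CompactSpace X]
    {H : Subspace ℝ C(X, ℝ)} (a : DualUnitBall H) (f : H) : |a.1 f| ≤ ‖(f : C(X, ℝ))‖ := by
  have h := @ContinuousLinearMap.le_opNorm ℝ ℝ H ℝ (Submodule.seminormedAddCommGroup H) _ _ _
    (Submodule.normedSpace H) _ _ _ a.1 f
  rw [Real.norm_eq_abs] at h
  exact h.trans (mul_le_of_le_one_left (norm_nonneg _) a.2)

variable {ι : Type*} [Fintype ι] {X : ι → Type*} [∀ i, TopologicalSpace (X i)]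
  [∀ i, CompactSpace (X i)] [∀ i, Nonempty (X i)] {H : ∀ i, Subspace ℝ C(X i, ℝ)}
  {α : ∀ i, StrongDual ℝ (H i)} {J : Type*} [Fintype J]

lemma abs_sum_mul_prod_dual_le (hα : ∀ i (f : H i), |α i f| ≤ ‖(f : C(X i, ℝ))‖)
    (S : J → ∀ i, H i) (c : J → ℝ) {R : ℝ}
    (hR : ∀ a : ∀ i, X i, |∑ j, c j * ∏ i, (S j i : C(X i, ℝ)) (a i)| ≤ R) :
    |∑ j, c j * ∏ i, α i (S j i)| ≤ R := by
  classical
  -- replace the point evaluations by the functionals one coordinate at a time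
  suffices key : ∀ (s : Finset ι) (a : ∀ i, X i),
      |∑ j, c j * ∏ i, if i ∈ s then α i (S j i) else (S j i : C(X i, ℝ)) (a i)| ≤ R by
    simpa using key Finset.univ (Classical.arbitrary _)
  intro s
  induction s using Finset.induction_on with
  | empty => simpa using hR
  | insert k s hk ih =>
    intro a
    set d : J → ℝ := fun j => c j * ∏ i ∈ Finset.univ.erase k,
      if i ∈ s then α i (S j i) else (S j i : C(X i, ℝ)) (a i)
    have hprod_erase (j : J) (b : ∀ i, X i) (hb : ∀ i ≠ k, b i = a i) (t : Finset ι)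
        (ht : ∀ i ≠ k, i ∈ t ↔ i ∈ s) :
        ∏ i ∈ Finset.univ.erase k, (if i ∈ t then α i (S j i) else (S j i : C(X i, ℝ)) (b i)) =
          ∏ i ∈ Finset.univ.erase k, if i ∈ s then α i (S j i) else (S j i : C(X i, ℝ)) (a i) := by
      refine Finset.prod_congr rfl fun i hi => ?_
      have hik := Finset.ne_of_mem_erase hi
      rw [hb i hik, if_congr (ht i hik) rfl rfl]
    have hins : ∑ j, c j * ∏ i, (if i ∈ insert k s then α i (S j i)
        else (S j i : C(X i, ℝ)) (a i)) = α k (∑ j, d j • S j k) := by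
      rw [map_sum]
      refine Finset.sum_congr rfl fun j _ => ?_
      rw [map_smul, smul_eq_mul, ← Finset.mul_prod_erase _ _ (Finset.mem_univ k),
        hprod_erase j a (fun _ _ => rfl) _ fun i hik => by simp [hik]]
      simp only [d, Finset.mem_insert_self, if_true]
      ring
    have hupd (x : X k) : ((∑ j, d j • S j k : H k) : C(X k, ℝ)) x = ∑ j, c j * ∏ i,
        if i ∈ s then α i (S j i) else (S j i : C(X i, ℝ)) (Function.update a k x i) := by
      simp only [Submodule.coe_sum, Submodule.coe_smul, ContinuousMap.sum_apply,
        ContinuousMap.smul_apply, smul_eq_mul]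
      refine Finset.sum_congr rfl fun j _ => ?_
      rw [← Finset.mul_prod_erase _ _ (Finset.mem_univ k),
        hprod_erase j _ (fun i hik => Function.update_of_ne hik _ _) s fun _ _ => Iff.rfl]
      simp only [d, hk, if_false, Function.update_self]
      ring
    rw [hins]
    refine (hα k _).trans ((ContinuousMap.norm_le_of_nonempty _).2 fun x => ?_)
    rw [Real.norm_eq_abs, hupd]
    exact ih _

lemma sum_phi_prod_dual_le_one {Φ : ℝ → ℝ} (hconv : ConvexOn ℝ (Ici 0) Φ)
    (hmono : MonotoneOn Φ (Ici 0)) (hcont : ContinuousOn Φ (Ici 0))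
    (hα : ∀ i (f : H i), |α i f| ≤ ‖(f : C(X i, ℝ))‖) (S : J → ∀ i, H i) {w : J → ℝ}
    (hw : ∀ j, 0 ≤ w j) {ε : ℝ} (hε : 0 < ε)
    (hpt : ∀ a : ∀ i, X i, ∑ j, Φ (|∏ i, (S j i : C(X i, ℝ)) (a i)| / ε) * w j ≤ 1) :
    ∑ j, Φ (|∏ i, α i (S j i)| / ε) * w j ≤ 1 := by
  classical
  set D := {z : J → ℝ | ∑ j, Φ (|z j| / ε) * w j ≤ 1}
  have hneg (z : J → ℝ) (hz : z ∈ D) : -z ∈ D := by simpa [D] using hz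
  -- `D` is closed, convex and symmetric, so it is cut out by the functionals it satisfies
  by_contra hy
  obtain ⟨f, r, hfD, hfy⟩ := geometric_hahn_banach_closed_point
    (convex_setOf_sum_phi_le hconv hmono hw hε 1) (isClosed_setOf_sum_phi_le hcont w hε 1) hy
  set c : J → ℝ := fun j => f fun l => if j = l then 1 else 0
  have hf (z : J → ℝ) : f z = ∑ j, c j * z j := by
    rw [← ContinuousLinearMap.coe_coe, LinearMap.pi_apply_eq_sum_univ]
    simp only [smul_eq_mul, mul_comm, c, ContinuousLinearMap.coe_coe]
  have hbound : |∑ j, c j * ∏ i, α i (S j i)| ≤ r := by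
    refine abs_sum_mul_prod_dual_le hα S c fun a => abs_le.2 ⟨?_, ?_⟩
    · have := hfD _ (hneg _ (hpt a))
      simp only [hf, Pi.neg_apply, mul_neg, Finset.sum_neg_distrib] at this
      linarith
    · exact (hf _ ▸ hfD _ (hpt a)).le
  rw [hf] at hfy
  linarith [le_abs_self (∑ j, c j * ∏ i, α i (S j i))]

end DualEvaluation

lemma Fintype.exists_fin_enum_support {ι : Type*} [Fintype ι] (w : ι → ℝ) :
    ∃ (n : ℕ) (e : Fin n → ι), (∀ j, w (e j) ≠ 0) ∧
      ∀ f : ι → ℝ, ∑ j, f (e j) * w (e j) = ∑ i, f i * w i := by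
  classical
  set s := Finset.univ.filter fun i => w i ≠ 0
  refine ⟨s.card, fun j => s.equivFin.symm j,
    fun j => (Finset.mem_filter.1 (s.equivFin.symm j).2).2, fun f => ?_⟩
  rw [Equiv.sum_comp s.equivFin.symm (fun i : s => f i * w i),
    Finset.sum_coe_sort s fun i => f i * w i]
  exact Finset.sum_filter_of_ne fun i _ hi => right_ne_zero_of_mul hi

section CompactGroup

open MeasureTheory Measure Topology
open scoped Function

variable {K : Type*} [Group K] [TopologicalSpace K] [IsTopologicalGroup K] [CompactSpace K]

lemma exists_mem_nhds_one_forall_abs_sub_lt {k : K → ℝ} (hk : Continuous k) {δ : ℝ}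
    (hδ : 0 < δ) : ∃ V ∈ 𝓝 (1 : K), ∀ v ∈ V, ∀ z, |k (v * z) - k z| < δ := by
  let _ := IsTopologicalGroup.rightUniformSpace K
  have h := CompactSpace.uniformContinuous_of_continuous hk (Metric.dist_mem_uniformity hδ)
  rw [uniformity_eq_comap_mul_inv_nhds_one, Filter.mem_map, Filter.mem_comap] at h
  obtain ⟨V, hV, hVsub⟩ := h
  refine ⟨V, hV, fun v hv z => ?_⟩
  have := @hVsub (z, v * z) (by simpa using hv)
  simpa [Real.dist_eq, abs_sub_comm] using this

variable [MeasurableSpace K] [BorelSpace K]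

lemma exists_measurable_partition_mul_inv_mem {V : Set K} (hV : V ∈ 𝓝 1) :
    ∃ (N : ℕ) (φ : Fin N → K) (B : Fin N → Set K), (∀ j, MeasurableSet (B j)) ∧
      Pairwise (Disjoint on B) ∧ ⋃ j, B j = univ ∧ ∀ j, ∀ z ∈ B j, z * (φ j)⁻¹ ∈ V := by
  set U : K → Set K := fun φ => (· * φ⁻¹) ⁻¹' interior V
  have hU (φ : K) : IsOpen (U φ) := isOpen_interior.preimage (continuous_mul_const _)
  obtain ⟨t, ht⟩ := isCompact_univ.elim_finite_subcover U hU fun φ _ =>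
    mem_iUnion.2 ⟨φ, by simpa [U] using mem_interior_iff_mem_nhds.2 hV⟩
  set φ : Fin t.card → K := fun j => t.equivFin.symm j
  refine ⟨t.card, φ, disjointed (U ∘ φ),
    fun j => disjointedRec (fun _ _ hs => hs.diff (hU _).measurableSet) (hU _).measurableSet,
    disjoint_disjointed _, ?_, fun j z hz => interior_subset (disjointed_subset _ j hz)⟩
  rw [iUnion_disjointed, eq_univ_iff_forall]
  intro z
  obtain ⟨ψ, hψt, hz⟩ := mem_iUnion₂.1 (ht (mem_univ z))
  exact mem_iUnion.2 ⟨t.equivFin ⟨ψ, hψt⟩, by simpa [φ] using hz⟩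

lemma isMulRightInvariant_of_isProbabilityMeasure_s11 (σ : Measure K) [IsProbabilityMeasure σ]
    [σ.IsMulLeftInvariant] : σ.IsMulRightInvariant := by
  have hHaar (μ : Measure K) [IsProbabilityMeasure μ] [μ.IsMulLeftInvariant] : μ.IsHaarMeasure :=
    isHaarMeasure_of_isCompact_nonempty_interior μ univ isCompact_univ (by simp) (by simp)
      (by simp)
  refine ⟨fun a => ?_⟩
  have := hHaar σ
  have := isProbabilityMeasure_map (μ := σ) (measurable_mul_const a).aemeasurable
  have := hHaar (map (· * a) σ)
  exact isHaarMeasure_eq_of_isProbabilityMeasure _ _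

lemma exists_sum_mul_le_integral_add (σ : Measure K) [IsProbabilityMeasure σ]
    [σ.IsMulLeftInvariant] {k : K → ℝ} (hk : Continuous k) {δ : ℝ} (hδ : 0 < δ) :
    ∃ (n : ℕ) (w : Fin n → ℝ) (φ : Fin n → K), (∀ j, 0 < w j) ∧ ∑ j, w j = 1 ∧
      ∀ a, ∑ j, k (φ j * a) * w j ≤ ∫ z, k z ∂σ + δ := by
  have := isMulRightInvariant_of_isProbabilityMeasure_s11 σ
  obtain ⟨V, hV, hVδ⟩ := exists_mem_nhds_one_forall_abs_sub_lt hk hδ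
  obtain ⟨N, φ, B, hBmeas, hBdisj, hBunion, hBV⟩ := exists_measurable_partition_mul_inv_mem hV
  have hint₀ (a : K) : Integrable (fun z => k (z * a)) σ :=
    (hk.comp (continuous_mul_const a)).integrable_of_hasCompactSupport
      (HasCompactSupport.of_compactSpace _)
  have hint (a : K) : Integrable (fun z => k (z * a) + δ) σ := (hint₀ a).add (integrable_const δ)
  have hRiemann (a : K) : ∑ j, k (φ j * a) * σ.real (B j) ≤ ∫ z, k z ∂σ + δ := calc
    ∑ j, k (φ j * a) * σ.real (B j) = ∑ j, ∫ _ in B j, k (φ j * a) ∂σ := by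
      simp [mul_comm]
    _ ≤ ∑ j, ∫ z in B j, (k (z * a) + δ) ∂σ := by
      refine Finset.sum_le_sum fun j _ => setIntegral_mono_on integrableOn_const
        (hint a).integrableOn (hBmeas j) fun z hz => ?_
      -- `z` is close to `φ j` on the left, so `z * a` is close to `φ j * a`
      have h := hVδ _ (hBV j z hz) (φ j * a)
      rw [show z * (φ j)⁻¹ * (φ j * a) = z * a by group] at h
      linarith [(abs_lt.1 h).1]
    _ = ∫ z, k z ∂σ + δ := by
      rw [← integral_iUnion_fintype hBmeas hBdisj fun _ => (hint a).integrableOn, hBunion,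
        setIntegral_univ, integral_add (hint₀ a) (integrable_const δ),
        integral_mul_right_eq_self k a, integral_const, probReal_univ, one_smul]
  obtain ⟨n, e, he, hsum⟩ := Fintype.exists_fin_enum_support fun j => σ.real (B j)
  refine ⟨n, fun j => σ.real (B (e j)), fun j => φ (e j),
    fun j => measureReal_nonneg.lt_of_ne' (he j), ?_, fun a => (hsum _).trans_le (hRiemann a)⟩
  have h1 := hsum 1
  simp only [Pi.one_apply, one_mul] at h1
  rw [← measureReal_iUnion_fintype hBdisj hBmeas, hBunion, probReal_univ] at h1
  simpa using h1

end CompactGroup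

lemma Real.le_sInf_mul {S : Set ℝ} (hS : S.Nonempty) {x L : ℝ} (hL : 0 ≤ L)
    (h : ∀ C ∈ S, x ≤ C * L) : x ≤ sInf S * L := by
  rw [mul_comm, ← smul_eq_mul, ← Real.sInf_smul_of_nonneg hL]
  refine le_csInf hS.smul_set ?_
  rintro _ ⟨C, hC, rfl⟩
  simpa [mul_comm] using h C hC

section PietschMeasure

variable {m : ℕ} {G : Fin m → Type*} [∀ i, TopologicalSpace (G i)] [∀ i, CompactSpace (G i)]
  {H : ∀ i, Subspace ℝ C(G i, ℝ)} {F : Type*} [NormedAddCommGroup F] [NormedSpace ℝ F]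

def PhiSummingWith (Φ : ℝ → ℝ) (u : ContinuousMultilinearMap ℝ (fun i => H i) F) (C : ℝ) :
    Prop :=
  ∀ n : ℕ, ∀ w : Fin n → ℝ, (∀ j, 0 < w j) → (∑ j, w j = 1) → ∀ x : Fin n → (∀ i, H i),
    orliczSeqNorm Φ w (fun j => ‖u (x j)‖) ≤
      C * ⨆ α : ∀ i, DualUnitBall (H i), orliczSeqNorm Φ w (fun j => ∏ i, (α i).1 (x j i))

variable [∀ i, Group (G i)] [∀ i, IsTopologicalGroup (G i)] {Φ : ℝ → ℝ}
  (hconv : ConvexOn ℝ (Ici 0) Φ) (hmono : MonotoneOn Φ (Ici 0)) (hcont : ContinuousOn Φ (Ici 0))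
  (h0 : Φ 0 = 0) (h1 : Φ 1 = 1)
  (hHinv : ∀ i, ∀ (ψ : G i) (T : C(G i, ℝ)), T ∈ H i →
    T.comp (Homeomorph.mulLeft ψ : C(G i, G i)) ∈ H i)
  {u : ContinuousMultilinearMap ℝ (fun i => H i) F}
  (huinv : ∀ (ψ : ∀ i, G i) (T : ∀ i, H i),
    u (fun i => (⟨(T i : C(G i, ℝ)).comp (Homeomorph.mulLeft (ψ i) : C(G i, G i)),
      hHinv i (ψ i) (T i) (T i).2⟩ : H i)) = u T)
include hconv hmono hcont h0 h1 huinv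

lemma norm_le_mul_of_sum_phi_translate_le {C : ℝ} (hC : 0 ≤ C) (hCu : PhiSummingWith Φ u C)
    (T : ∀ i, H i) {n : ℕ} {w : Fin n → ℝ} (hw : ∀ j, 0 < w j) (hw1 : ∑ j, w j = 1)
    (φ : Fin n → ∀ i, G i) {ε : ℝ} (hε : 0 < ε)
    (hpt : ∀ a, ∑ j, Φ (|∏ i, (T i : C(G i, ℝ)) ((φ j * a) i)| / ε) * w j ≤ 1) :
    ‖u T‖ ≤ C * ε := by
  set x : Fin n → ∀ i, H i := fun j i =>
    ⟨(T i : C(G i, ℝ)).comp (Homeomorph.mulLeft (φ j i) : C(G i, G i)),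
      hHinv i (φ j i) (T i) (T i).2⟩
  calc ‖u T‖ ≤ orliczSeqNorm Φ w fun j => ‖u (x j)‖ := by
        simpa only [x, huinv] using le_orliczSeqNorm_const hconv h0 h1 hw1 (norm_nonneg (u T))
    _ ≤ C * _ := hCu n w hw hw1 x
    _ ≤ C * ε := by
        refine mul_le_mul_of_nonneg_left (ciSup_le fun α => orliczSeqNorm_le hε ?_) hC
        exact sum_phi_prod_dual_le_one hconv hmono hcont
          (fun i => (α i).abs_apply_le) x (fun j => (hw j).le) hε hpt

lemma norm_le_mul_luxemburgNorm [MeasurableSpace (∀ i, G i)] [BorelSpace (∀ i, G i)]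
    (σ : Measure (∀ i, G i)) [IsProbabilityMeasure σ]
    [σ.IsMulLeftInvariant] {C : ℝ} (hC : 0 < C) (hCu : PhiSummingWith Φ u C) (T : ∀ i, H i) :
    ‖u T‖ ≤ C * luxemburgNorm Φ σ fun φ => ∏ i, (T i : C(G i, ℝ)) (φ i) := by
  refine le_of_forall_gt_imp_ge_of_dense fun b hb => ?_
  set g := fun φ : ∀ i, G i => ∏ i, (T i : C(G i, ℝ)) (φ i)
  have hg : Continuous g := by fun_prop
  have hε : luxemburgNorm Φ σ g < b / C := by rwa [lt_div_iff₀' hC]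
  have hεpos : 0 < b / C := (luxemburgNorm_nonneg Φ σ g).trans_lt hε
  have hk : Continuous fun z => Φ (|g z| / (b / C)) :=
    hcont.comp_continuous (hg.abs.div_const _) fun z => mem_Ici.2 (by positivity)
  obtain ⟨n, w, φ, hw, hw1, hsum⟩ := exists_sum_mul_le_integral_add σ hk
    (sub_pos.2 (integral_phi_div_lt_one_of_luxemburgNorm_lt σ hconv hmono hcont h0 h1 hg hε))
  calc ‖u T‖ ≤ C * (b / C) := norm_le_mul_of_sum_phi_translate_le hconv hmono hcont h0 h1 hHinv
        huinv hC.le hCu T hw hw1 φ hεpos fun a => (hsum a).trans (by rw [add_sub_cancel])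
    _ = b := mul_div_cancel₀ _ hC.ne'

end PietschMeasure

theorem haar_is_pietsch_measure_phi_summing_general
    {m : ℕ} {G : Fin m → Type*}
    [∀ i, Group (G i)] [∀ i, TopologicalSpace (G i)] [∀ i, IsTopologicalGroup (G i)]
    [∀ i, CompactSpace (G i)]
    {F : Type*} [NormedAddCommGroup F] [NormedSpace ℝ F]
    (H : ∀ i, Subspace ℝ C(G i, ℝ))
    -- each `Hᵢ` is translation invariant
    (hHinv : ∀ i, ∀ (ψ : G i) (T : C(G i, ℝ)), T ∈ H i →
      T.comp (Homeomorph.mulLeft ψ : C(G i, G i)) ∈ H i)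
    -- `Φ` is a normalized Orlicz function
    (Φ : ℝ → ℝ) (hΦconv : ConvexOn ℝ (Set.Ici 0) Φ) (hΦmono : MonotoneOn Φ (Set.Ici 0))
    (hΦcont : ContinuousOn Φ (Set.Ici 0)) (hΦ0 : Φ 0 = 0) (hΦ1 : Φ 1 = 1)
    (u : ContinuousMultilinearMap ℝ (fun i => H i) F)
    -- `u` is translation `m`-invariant
    (huinv : ∀ (ψ : ∀ i, G i) (T : ∀ i, H i),
      u (fun i => (⟨(T i : C(G i, ℝ)).comp (Homeomorph.mulLeft (ψ i) : C(G i, G i)),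
        hHinv i (ψ i) (T i) (T i).2⟩ : H i)) = u T)
    -- `u` is `Φ`-summing
    (husum : ∃ C > (0 : ℝ), ∀ n : ℕ, ∀ w : Fin n → ℝ, (∀ j, 0 < w j) → (∑ j, w j = 1) →
      ∀ x : Fin n → (∀ i, H i),
        orliczSeqNorm Φ w (fun j => ‖u (x j)‖) ≤
          C * ⨆ α : ∀ i, {a : StrongDual ℝ (H i) //
            @norm _ (@ContinuousLinearMap.hasOpNorm ℝ ℝ (H i) ℝ (Submodule.seminormedAddCommGroup (H i))
              _ _ _ (Submodule.normedSpace (H i)) _ _) a ≤ 1},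
            orliczSeqNorm Φ w (fun j => ∏ i, (α i).1 (x j i))) :
    letI : MeasurableSpace (∀ i, G i) := borel _
    -- for the normalized Haar measure `σ` on `G₁ × ⋯ × Gₘ`
    ∀ σ : Measure (∀ i, G i), IsProbabilityMeasure σ → σ.IsMulLeftInvariant → σ.Regular →
      ∀ T : ∀ i, H i,
        ‖u T‖ ≤
          sInf {C : ℝ | 0 < C ∧ ∀ n : ℕ, ∀ w : Fin n → ℝ, (∀ j, 0 < w j) → (∑ j, w j = 1) →
              ∀ x : Fin n → (∀ i, H i),
                orliczSeqNorm Φ w (fun j => ‖u (x j)‖) ≤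
                  C * ⨆ α : ∀ i, {a : StrongDual ℝ (H i) //
            @norm _ (@ContinuousLinearMap.hasOpNorm ℝ ℝ (H i) ℝ (Submodule.seminormedAddCommGroup (H i))
              _ _ _ (Submodule.normedSpace (H i)) _ _) a ≤ 1},
                    orliczSeqNorm Φ w (fun j => ∏ i, (α i).1 (x j i))} *
            luxemburgNorm Φ σ (fun φ => ∏ i, (T i : C(G i, ℝ)) (φ i)) := by
  intro σ _ _ _ T
  let _ : MeasurableSpace (∀ i, G i) := borel _
  have : BorelSpace (∀ i, G i) := ⟨rfl⟩
  obtain ⟨C₀, hC₀, hC₀u⟩ := husum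
  refine Real.le_sInf_mul ⟨C₀, ?_⟩ (luxemburgNorm_nonneg _ _ _) fun C hC => ?_
  · exact ⟨hC₀, hC₀u⟩
  · exact norm_le_mul_luxemburgNorm hΦconv hΦmono hΦcont hΦ0 hΦ1 hHinv huinv σ hC.1 hC.2 T

/-- Let `G₁,…,Gₘ` be compact Hausdorff topological groups, `Hᵢ` a closed
translation invariant subspace of `C(Gᵢ)`, `Φ` a normalized Orlicz function, and
`u : H₁ × ⋯ × Hₘ → F` a translation `m`-invariant `Φ`-summing continuous `m`-linear operator.
Then the normalized Haar measure `σ` on `G = G₁ × ⋯ × Gₘ` is a Pietsch measure for `u`: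
`‖u(T₁,…,Tₘ)‖ ≤ π_Φ(u) ⬝ ‖⊙(T₁,…,Tₘ)‖_{L_Φ(σ)}`. -/
theorem haar_is_pietsch_measure_phi_summing
    {m : ℕ} (hm : 0 < m) {G : Fin m → Type*}
    [∀ i, Group (G i)] [∀ i, TopologicalSpace (G i)] [∀ i, IsTopologicalGroup (G i)]
    [∀ i, CompactSpace (G i)] [∀ i, T2Space (G i)]
    {F : Type*} [NormedAddCommGroup F] [NormedSpace ℝ F] [CompleteSpace F]
    (H : ∀ i, Subspace ℝ C(G i, ℝ)) (hHclosed : ∀ i, IsClosed ((H i : Set C(G i, ℝ))))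
    -- each `Hᵢ` is translation invariant
    (hHinv : ∀ i, ∀ (ψ : G i) (T : C(G i, ℝ)), T ∈ H i →
      T.comp (Homeomorph.mulLeft ψ : C(G i, G i)) ∈ H i)
    -- `Φ` is a normalized Orlicz function
    (Φ : ℝ → ℝ) (hΦconv : ConvexOn ℝ (Set.Ici 0) Φ) (hΦmono : MonotoneOn Φ (Set.Ici 0))
    (hΦcont : ContinuousOn Φ (Set.Ici 0)) (hΦ0 : Φ 0 = 0) (hΦ1 : Φ 1 = 1)
    (u : ContinuousMultilinearMap ℝ (fun i => H i) F)
    -- `u` is translation `m`-invariant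
    (huinv : ∀ (ψ : ∀ i, G i) (T : ∀ i, H i),
      u (fun i => (⟨(T i : C(G i, ℝ)).comp (Homeomorph.mulLeft (ψ i) : C(G i, G i)),
        hHinv i (ψ i) (T i) (T i).2⟩ : H i)) = u T)
    -- `u` is `Φ`-summing
    (husum : ∃ C > (0 : ℝ), ∀ n : ℕ, ∀ w : Fin n → ℝ, (∀ j, 0 < w j) → (∑ j, w j = 1) →
      ∀ x : Fin n → (∀ i, H i),
        orliczSeqNorm Φ w (fun j => ‖u (x j)‖) ≤
          C * ⨆ α : ∀ i, {a : StrongDual ℝ (H i) //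
            @norm _ (@ContinuousLinearMap.hasOpNorm ℝ ℝ (H i) ℝ (Submodule.seminormedAddCommGroup (H i))
              _ _ _ (Submodule.normedSpace (H i)) _ _) a ≤ 1},
            orliczSeqNorm Φ w (fun j => ∏ i, (α i).1 (x j i))) :
    letI : MeasurableSpace (∀ i, G i) := borel _
    -- for the normalized Haar measure `σ` on `G₁ × ⋯ × Gₘ`
    ∀ σ : Measure (∀ i, G i), IsProbabilityMeasure σ → σ.IsMulLeftInvariant → σ.Regular →
      ∀ T : ∀ i, H i,
        ‖u T‖ ≤
          sInf {C : ℝ | 0 < C ∧ ∀ n : ℕ, ∀ w : Fin n → ℝ, (∀ j, 0 < w j) → (∑ j, w j = 1) →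
              ∀ x : Fin n → (∀ i, H i),
                orliczSeqNorm Φ w (fun j => ‖u (x j)‖) ≤
                  C * ⨆ α : ∀ i, {a : StrongDual ℝ (H i) //
            @norm _ (@ContinuousLinearMap.hasOpNorm ℝ ℝ (H i) ℝ (Submodule.seminormedAddCommGroup (H i))
              _ _ _ (Submodule.normedSpace (H i)) _ _) a ≤ 1},
                    orliczSeqNorm Φ w (fun j => ∏ i, (α i).1 (x j i))} *
            luxemburgNorm Φ σ (fun φ => ∏ i, (T i : C(G i, ℝ)) (φ i)) :=
  haar_is_pietsch_measure_phi_summing_general H hHinv Φ hΦconv hΦmono hΦcont hΦ0 hΦ1 u huinv husum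
end
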